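/- Let Φ = ∃x_1...x_k. cond. φ be an ∃LTL(EQ) formula over Boolean propositions P, let φ_B be the LTL formula over P_B = P ∪ {g_{ir_1},...,g_{ir_k}} ∪ {g_{or_1},...,g_{or_k}} obtained from φ by replacing every atom i = x_m by the proposition g_{ir_m} and every atom o = x_m by g_{or_m}, let A_B be any nondeterministic Büchi automaton over the alphabet 2^(P_B) whose language equals the set of models of φ_B, and let A be the k-register-guessing automaton obtained from A_B by reading, in each letter, the truth of g_{ir_m} (resp. g_{or_m}) as the m-th bit of the i-guard (resp. o-guard) on registers r_1,...,r_k, and with inequality set E = {(r_m, r_n) : the conjunct x_m ≠ x_n occurs in cond}. Then for every word w ∈ (2^P × D × D)^ω: w is accepted by A if and only if w ⊨ Φ. -/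
import Mathlib


/-- Quantifier-free bodies of LTL(EQ) formulas over Boolean propositions `P`, the two
data-propositions `i` and `o`, and data-variables `x_1, ..., x_k`: built from `true`,
propositions `p ∈ P` and atoms `i = x_m`, `o = x_m` using `¬`, `∧`, `X` and `U`. -/
inductive LTLEQ (P : Type) (k : ℕ) : Type
  | tt : LTLEQ P k
  | prop (p : P) : LTLEQ P k
  | ieq (m : Fin k) : LTLEQ P k
  | oeq (m : Fin k) : LTLEQ P k
  | not (φ : LTLEQ P k) : LTLEQ P k
  | and (φ ψ : LTLEQ P k) : LTLEQ P k
  | next (φ : LTLEQ P k) : LTLEQ P k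
  | untl (φ ψ : LTLEQ P k) : LTLEQ P k

/-- Data semantics: satisfaction of `φ[x_1 ← d 1, ..., x_k ← d k]` at position `j` of a
word `w ∈ (2^P × D × D)^ω`. -/
def satD {P D : Type} {k : ℕ} (w : ℕ → (P → Bool) × D × D) (d : Fin k → D) :
    LTLEQ P k → ℕ → Prop
  | .tt, _ => True
  | .prop p, j => (w j).1 p = true
  | .ieq m, j => (w j).2.1 = d m
  | .oeq m, j => (w j).2.2 = d m
  | .not φ, j => ¬ satD w d φ j
  | .and φ ψ, j => satD w d φ j ∧ satD w d ψ j
  | .next φ, j => satD w d φ (j + 1)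
  | .untl φ ψ, j => ∃ i, j ≤ i ∧ satD w d ψ i ∧ ∀ m, j ≤ m → m < i → satD w d φ m

/-- Boolean semantics: satisfaction of the LTL formula `φ_B` (obtained from `φ` by
replacing every atom `i = x_m` by the fresh proposition `g_{ir_m}` and every `o = x_m`
by `g_{or_m}`) over words in `(2^(P ∪ G_i ∪ G_o))^ω`. -/
def satB {P : Type} {k : ℕ} (wB : ℕ → (P → Bool) × (Fin k → Bool) × (Fin k → Bool)) :
    LTLEQ P k → ℕ → Prop
  | .tt, _ => True
  | .prop p, j => (wB j).1 p = true
  | .ieq m, j => (wB j).2.1 m = true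
  | .oeq m, j => (wB j).2.2 m = true
  | .not φ, j => ¬ satB wB φ j
  | .and φ ψ, j => satB wB φ j ∧ satB wB ψ j
  | .next φ, j => satB wB φ (j + 1)
  | .untl φ ψ, j => ∃ i, j ≤ i ∧ satB wB ψ i ∧ ∀ m, j ≤ m → m < i → satB wB φ m

/-- Acceptance by a nondeterministic Büchi (register-less) automaton. -/
def NBWAccepts {α Q : Type} (q0 : Q) (F : Set Q) (δ : Q → α → Set Q) (w : ℕ → α) :
    Prop :=
  ∃ st : ℕ → Q, st 0 = q0 ∧ (∀ j, st (j + 1) ∈ δ (st j) (w j)) ∧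
    ∀ N, ∃ j, N ≤ j ∧ st j ∈ F

/-- Acceptance by the `k`-register-guessing automaton obtained from a Büchi automaton
over `2^(P ∪ G_i ∪ G_o)` by reading the `G_i`/`G_o` parts of the letters as guards on
the registers: a path first guesses an initial register valuation `d` satisfying the
inequality set `E`; the registers never change. -/
def GuessAccepts {P D Q : Type} [DecidableEq D] {k : ℕ} (E : Set (Fin k × Fin k))
    (q0 : Q) (F : Set Q)
    (δ : Q → (P → Bool) → (Fin k → Bool) → (Fin k → Bool) → Set Q)
    (w : ℕ → (P → Bool) × D × D) : Prop :=
  ∃ d : Fin k → D, (∀ p ∈ E, d p.1 ≠ d p.2) ∧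
    ∃ st : ℕ → Q, st 0 = q0 ∧
      (∀ j, st (j + 1) ∈ δ (st j) (w j).1
        (fun m => decide ((w j).2.1 = d m)) (fun m => decide ((w j).2.2 = d m))) ∧
      ∀ N, ∃ j, N ≤ j ∧ st j ∈ F

/-- let `Φ = ∃x_1...x_k. cond. φ` be an ∃LTL(EQ) formula (the conjunction
`cond` of inequalities is modelled by the set `E` of pairs), let `A_B` be any
nondeterministic Büchi automaton over `2^(P_B)` whose language equals the models of
`φ_B`, and let `A` be the `k`-register-guessing automaton read off from `A_B` with
inequality set `E`.  Then for every word `w ∈ (2^P × D × D)^ω`: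
`w` is accepted by `A` iff `w ⊨ Φ`. -/
lemma satD_iff_satB {P D : Type} [DecidableEq D] {k : ℕ}
    (w : ℕ → (P → Bool) × D × D) (d : Fin k → D) (φ : LTLEQ P k) (j : ℕ) :
    satD w d φ j ↔
      satB (fun j => ((w j).1, fun m => decide ((w j).2.1 = d m),
        fun m => decide ((w j).2.2 = d m))) φ j := by
  induction φ generalizing j with
  | tt => simp [satD, satB]
  | prop p => simp [satD, satB]
  | ieq m => simp [satD, satB]
  | oeq m => simp [satD, satB]
  | not φ ih => simp [satD, satB, ih]
  | and φ ψ ih1 ih2 => simp [satD, satB, ih1, ih2]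
  | next φ ih => simp [satD, satB, ih]
  | untl φ ψ ih1 ih2 => simp [satD, satB, ih1, ih2]

theorem stmt15 (D P Q : Type) [Infinite D] [DecidableEq D] [Finite P] (k : ℕ)
    (φ : LTLEQ P k) (E : Set (Fin k × Fin k)) (q0 : Q) (F : Set Q)
    (δB : Q → ((P → Bool) × (Fin k → Bool) × (Fin k → Bool)) → Set Q)
    (hAB : ∀ wB : ℕ → (P → Bool) × (Fin k → Bool) × (Fin k → Bool),
      NBWAccepts q0 F δB wB ↔ satB wB φ 0) :
    ∀ w : ℕ → (P → Bool) × D × D,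
      GuessAccepts E q0 F (fun q l gi go => δB q (l, gi, go)) w ↔
      (∃ d : Fin k → D, (∀ p ∈ E, d p.1 ≠ d p.2) ∧ satD w d φ 0) := by
  intro w
  constructor
  · rintro ⟨d, hd, st, h0, hstep, hinf⟩
    refine ⟨d, hd, ?_⟩
    rw [satD_iff_satB]
    exact (hAB _).mp ⟨st, h0, hstep, hinf⟩
  · rintro ⟨d, hd, hsat⟩
    rw [satD_iff_satB] at hsat
    obtain ⟨st, h0, hstep, hinf⟩ := (hAB _).mpr hsat
    exact ⟨d, hd, st, h0, hstep, hinf⟩
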